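/- arXiv:2410.22069 — 3 statements merged into one kernel-verified Lean document; each statement's English description precedes it below -/
import Mathlib

section
/- For every θ ∈ ℝ^p one has ⟨θ, −∇𝓛(θ)⟩ = L · Σ_{i=1}^m exp(−y_i f(θ, x_i)) · y_i f(θ, x_i), and consequently ⟨θ, −∇𝓛(θ)⟩ ≥ L · 𝓛(θ) · log(1/𝓛(θ)). -/
/- Euler's identity `⟨θ, ∇f_i(θ)⟩ = L f_i(θ)` turns `⟨θ, -∇𝓛(θ)⟩` into
`L Σ_i e^{-u_i} u_i` with margins `u_i = y_i f(θ, x_i)`. Since every single term `e^{-u_i}` is at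
most `𝓛(θ)`, each margin satisfies `u_i ≥ log (1/𝓛(θ))`, and averaging with the weights
`e^{-u_i}` gives `Σ_i e^{-u_i} u_i ≥ 𝓛(θ) log (1/𝓛(θ))`. -/

open Filter

noncomputable section

abbrev E (p : ℕ) : Type := EuclideanSpace ℝ (Fin p)

/-- `N` is a norm on `ℝ^p`. -/
def IsNormOn {p : ℕ} (N : E p → ℝ) : Prop :=
  (∀ θ, 0 ≤ N θ) ∧ (∀ θ, N θ = 0 ↔ θ = 0) ∧
    (∀ (c : ℝ) (θ : E p), N (c • θ) = |c| * N θ) ∧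
    ∀ θ θ' : E p, N (θ + θ') ≤ N θ + N θ'

/-- The dual norm `N_*(z) = sup {⟨z, v⟩ : N v ≤ 1}`. -/
def DualNorm {p : ℕ} (N : E p → ℝ) (z : E p) : ℝ :=
  sSup ((fun v => (inner ℝ z v : ℝ)) '' {v | N v ≤ 1})

/-- The exponential loss `𝓛(θ) = Σ_i exp (-(y_i f(θ, x_i)))`. -/
def ExpLoss {p d m : ℕ} (f : E p → E d → ℝ) (x : Fin m → E d) (y : Fin m → ℝ)
    (θ : E p) : ℝ :=
  ∑ i, Real.exp (-(y i * f θ (x i)))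

/-- A steepest-flow trajectory for the loss `𝓛` with respect to the norm `N`,
with derivative curve `θ'`. -/
def IsSteepestFlow {p : ℕ} (N : E p → ℝ) (𝓛 : E p → ℝ) (θ θ' : ℝ → E p) : Prop :=
  ∀ t, (0:ℝ) ≤ t → HasDerivAt θ (θ' t) t ∧
    (inner ℝ (θ' t) (gradient 𝓛 (θ t)) : ℝ) = -(DualNorm N (gradient 𝓛 (θ t))) ^ 2 ∧
    N (θ' t) = DualNorm N (gradient 𝓛 (θ t))

/-- The soft margin `γ̃(θ) = -log 𝓛(θ) / N(θ)^L`. -/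
def SoftMargin {p : ℕ} (N : E p → ℝ) (𝓛 : E p → ℝ) (L : ℝ) (θ : E p) : ℝ :=
  -Real.log (𝓛 θ) / N θ ^ L

/-- The hard margin `γ(θ) = (min_i y_i f(θ, x_i)) / N(θ)^L`. -/
def HardMargin {p d m : ℕ} (N : E p → ℝ) (f : E p → E d → ℝ) (x : Fin m → E d)
    (y : Fin m → ℝ) (L : ℝ) (θ : E p) : ℝ :=
  (⨅ i, y i * f θ (x i)) / N θ ^ L

/-- The alignment `A(t) = ⟨θ(t)/N(θ(t)), -∇𝓛(θ(t))/N_*(∇𝓛(θ(t)))⟩`. -/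
def FlowAlignment {p : ℕ} (N : E p → ℝ) (𝓛 : E p → ℝ) (θ : ℝ → E p) (t : ℝ) : ℝ :=
  inner ℝ ((N (θ t))⁻¹ • θ t) (-((DualNorm N (gradient 𝓛 (θ t)))⁻¹ • gradient 𝓛 (θ t)))

open Real Topology

theorem HasFDerivAt.apply_self_of_homogeneous {F : Type*} [NormedAddCommGroup F]
    [NormedSpace ℝ F] {g : F → ℝ} {g' : F →L[ℝ] ℝ} {θ : F} {L : ℝ} (hg : HasFDerivAt g g' θ)
    (hhom : ∀ c : ℝ, 0 < c → g (c • θ) = c ^ L * g θ) :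
    g' θ = L * g θ := by
  -- differentiate `c ↦ g (c • θ) = c ^ L * g θ` at `c = 1` in two ways
  have hray : HasDerivAt (fun c : ℝ => g (c • θ)) (g' θ) 1 := by
    rw [← one_smul ℝ θ] at hg
    exact hg.comp_hasDerivAt (1 : ℝ) (by simpa using (hasDerivAt_id (1 : ℝ)).smul_const θ)
  have hpow : HasDerivAt (fun c : ℝ => c ^ L * g θ) (L * g θ) 1 := by
    simpa using ((Real.hasDerivAt_rpow_const (p := L) (Or.inl one_ne_zero)).mul_const (g θ))
  have hnear : (fun c : ℝ => g (c • θ)) =ᶠ[𝓝 1] fun c => c ^ L * g θ :=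
    eventually_of_mem (Ioi_mem_nhds one_pos) hhom
  exact (hnear.hasDerivAt_iff.mp hray).unique hpow

theorem hasFDerivAt_expLoss {p d m : ℕ} {f : E p → E d → ℝ} {x : Fin m → E d}
    {y : Fin m → ℝ} {θ : E p} (hf : ∀ i, DifferentiableAt ℝ (fun θ => f θ (x i)) θ) :
    HasFDerivAt (ExpLoss f x y)
      (∑ i, exp (-(y i * f θ (x i))) • -(y i • fderiv ℝ (fun θ => f θ (x i)) θ)) θ :=
  HasFDerivAt.fun_sum fun i _ =>
    (hasDerivAt_exp _).comp_hasFDerivAt θ (((hf i).hasFDerivAt.const_mul (y i)).neg)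

theorem inner_neg_gradient_expLoss {p d m : ℕ} {f : E p → E d → ℝ} {x : Fin m → E d}
    {y : Fin m → ℝ} {L : ℝ} {θ : E p} (hf : ∀ i, DifferentiableAt ℝ (fun θ => f θ (x i)) θ)
    (hhom : ∀ i, ∀ c : ℝ, 0 < c → f (c • θ) (x i) = c ^ L * f θ (x i)) :
    inner ℝ θ (-gradient (ExpLoss f x y) θ) =
      L * ∑ i, exp (-(y i * f θ (x i))) * (y i * f θ (x i)) := by
  have heuler : ∀ i, fderiv ℝ (fun θ => f θ (x i)) θ θ = L * f θ (x i) := fun i =>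
    (hf i).hasFDerivAt.apply_self_of_homogeneous (hhom i)
  rw [inner_neg_right, inner_gradient_right, conj_trivial, (hasFDerivAt_expLoss hf).fderiv,
    sum_apply, Finset.mul_sum, ← Finset.sum_neg_distrib]
  refine Finset.sum_congr rfl fun i _ => ?_
  simp only [smul_apply, neg_apply, smul_eq_mul, heuler]
  ring

theorem sum_exp_neg_mul_log_one_div_le {ι : Type*} (s : Finset ι) (u : ι → ℝ) :
    (∑ i ∈ s, exp (-u i)) * log (1 / ∑ i ∈ s, exp (-u i)) ≤ ∑ i ∈ s, exp (-u i) * u i := by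
  have hmargin : ∀ i ∈ s, log (1 / ∑ j ∈ s, exp (-u j)) ≤ u i := fun i hi => by
    have hterm : exp (-u i) ≤ ∑ j ∈ s, exp (-u j) :=
      Finset.single_le_sum (fun j _ => (exp_pos (-u j)).le) hi
    have hlog := log_le_log (exp_pos _) hterm
    rw [log_exp] at hlog
    rw [one_div, log_inv]
    linarith
  rw [Finset.sum_mul]
  exact Finset.sum_le_sum fun i hi => mul_le_mul_of_nonneg_left (hmargin i hi) (exp_pos _).le

theorem stmt_0_general {p d m : ℕ}
    (x : Fin m → E d) (y : Fin m → ℝ)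
    (L : ℝ) (hL : 0 < L) (f : E p → E d → ℝ)
    (hf : ∀ x' : E d, ContDiff ℝ 1 fun θ => f θ x')
    (hhom : ∀ c : ℝ, 0 < c → ∀ (θ : E p) (x' : E d), f (c • θ) x' = c ^ L * f θ x')
    (θ : E p) :
    (inner ℝ θ (-gradient (ExpLoss f x y) θ) : ℝ) =
      L * ∑ i, Real.exp (-(y i * f θ (x i))) * (y i * f θ (x i)) ∧
    (inner ℝ θ (-gradient (ExpLoss f x y) θ) : ℝ) ≥
      L * ExpLoss f x y θ * Real.log (1 / ExpLoss f x y θ) := by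
  have heq := inner_neg_gradient_expLoss (y := y) (θ := θ)
    (fun i => ((hf (x i)).differentiable one_ne_zero).differentiableAt)
    (fun i c hc => hhom c hc θ (x i))
  refine ⟨heq, ?_⟩
  rw [heq, mul_assoc]
  exact mul_le_mul_of_nonneg_left
    (sum_exp_neg_mul_log_one_div_le Finset.univ fun i => y i * f θ (x i)) hL.le

theorem stmt_0 {p d m : ℕ} (hp : 0 < p) (hd : 0 < d) (hm : 0 < m)
    (x : Fin m → E d) (y : Fin m → ℝ) (hy : ∀ i, y i = 1 ∨ y i = -1)
    (L : ℝ) (hL : 0 < L) (f : E p → E d → ℝ)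
    (hf : ∀ x' : E d, ContDiff ℝ 1 fun θ => f θ x')
    (hhom : ∀ c : ℝ, 0 < c → ∀ (θ : E p) (x' : E d), f (c • θ) x' = c ^ L * f θ x')
    (θ : E p) :
    (inner ℝ θ (-gradient (ExpLoss f x y) θ) : ℝ) =
      L * ∑ i, Real.exp (-(y i * f θ (x i))) * (y i * f θ (x i)) ∧
    (inner ℝ θ (-gradient (ExpLoss f x y) θ) : ℝ) ≥
      L * ExpLoss f x y θ * Real.log (1 / ExpLoss f x y θ) :=
  stmt_0_general x y L hL f hf hhom θ
end
end

section
/- Let θ be a steepest-flow trajectory and t0 ≥ 0 with 𝓛(θ(t0)) < 1. Let t > t0 be such that θ(t) ≠ 0, ∇𝓛(θ(t)) ≠ 0, the function s ↦ N(θ(s)) is differentiable at t, and the function s ↦ log γ̃(θ(s)) is differentiable at t. Then (d/dt) log γ̃(θ(t)) ≥ L · N(θ'(t))² · ( 1/(L · 𝓛(θ(t)) · log(1/𝓛(θ(t)))) − 1/(N(θ(t)) · N(θ'(t))) ) ≥ 0. -/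
open Filter

noncomputable section

/-! Along a steepest flow the loss decreases at rate `N(θ')²`, so `𝓛 < 1` persists after `t0`, and
`d/dt log γ̃ = N(θ')² / (𝓛 log (1/𝓛)) - L (d/dt N(θ)) / N(θ)`. Since `N(θ)` grows at most at rate
`N(θ')`, this gives the first inequality. For the second, Euler's identity for the `L`-homogeneous
`f` gives `-⟪∇𝓛(θ), θ⟫ = L Σ qᵢ e^{-qᵢ}` with margins `qᵢ = yᵢ f(θ, xᵢ) ≥ log (1/𝓛)`, so
`L 𝓛 log (1/𝓛) ≤ -⟪∇𝓛(θ), θ⟫ ≤ N_*(∇𝓛) N(θ) = N(θ') N(θ)`. -/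

open Topology

namespace IsNormOn

variable {p : ℕ} {N : E p → ℝ}

def toSeminorm (hN : IsNormOn N) : Seminorm ℝ (E p) :=
  Seminorm.of N hN.2.2.2 fun c v => by rw [hN.2.2.1, Real.norm_eq_abs]

theorem coe_toSeminorm (hN : IsNormOn N) : ⇑hN.toSeminorm = N := rfl

theorem continuous (hN : IsNormOn N) : Continuous N :=
  continuousOn_univ.1 (hN.toSeminorm.convexOn.continuousOn isOpen_univ)

theorem pos (hN : IsNormOn N) {v : E p} (hv : v ≠ 0) : 0 < N v :=
  (hN.1 v).lt_of_ne' fun h => hv ((hN.2.1 v).1 h)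

theorem exists_pos_mul_norm_le (hN : IsNormOn N) : ∃ c > 0, ∀ v : E p, c * ‖v‖ ≤ N v := by
  cases subsingleton_or_nontrivial (E p)
  · exact ⟨1, one_pos, fun v => by simp [Subsingleton.elim v 0, hN.1]⟩
  obtain ⟨v₀, hv₀, hmin⟩ := (isCompact_sphere (0 : E p) 1).exists_isMinOn
    (NormedSpace.sphere_nonempty.2 zero_le_one) hN.continuous.continuousOn
  refine ⟨N v₀, hN.pos (ne_zero_of_mem_sphere one_ne_zero ⟨v₀, hv₀⟩), fun v => ?_⟩
  rcases eq_or_ne v 0 with rfl | hv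
  · simp [hN.1]
  have hv' : 0 < ‖v‖ := norm_pos_iff.2 hv
  have h : N v₀ ≤ N (‖v‖⁻¹ • v) := hmin <| by
    rw [mem_sphere_zero_iff_norm, norm_smul, norm_inv, norm_norm, inv_mul_cancel₀ hv'.ne']
  rw [hN.2.2.1, abs_of_pos (inv_pos.2 hv'), inv_mul_eq_div, le_div_iff₀ hv'] at h
  exact h

end IsNormOn

namespace DualNorm

variable {p : ℕ} {N : E p → ℝ}

theorem bddAbove (hN : IsNormOn N) (z : E p) :
    BddAbove ((fun v => (inner ℝ z v : ℝ)) '' {v | N v ≤ 1}) := by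
  obtain ⟨c, hc, hle⟩ := hN.exists_pos_mul_norm_le
  refine ⟨‖z‖ / c, ?_⟩
  rintro _ ⟨v, hv, rfl⟩
  calc inner ℝ z v ≤ ‖z‖ * ‖v‖ := real_inner_le_norm z v
    _ ≤ ‖z‖ / c := by
      rw [le_div_iff₀ hc, mul_assoc]
      exact mul_le_of_le_one_right (norm_nonneg z) (by rw [mul_comm]; exact (hle v).trans hv)

theorem inner_le_mul (hN : IsNormOn N) (z v : E p) :
    inner ℝ z v ≤ DualNorm N z * N v := by
  rcases eq_or_ne v 0 with rfl | hv
  · simp [(hN.2.1 0).2 rfl]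
  have hNv := hN.pos hv
  have h : inner ℝ z ((N v)⁻¹ • v) ≤ DualNorm N z := by
    refine le_csSup (bddAbove hN z) ⟨_, ?_, rfl⟩
    show N _ ≤ 1
    rw [hN.2.2.1, abs_of_pos (inv_pos.2 hNv), inv_mul_cancel₀ hNv.ne']
  rwa [real_inner_smul_right, inv_mul_eq_div, div_le_iff₀ hNv] at h

end DualNorm

theorem Seminorm.le_of_hasDerivAt {V : Type*} [NormedAddCommGroup V] [NormedSpace ℝ V]
    (q : Seminorm ℝ V) (hq : Continuous q) {γ : ℝ → V} {v : V} {a t : ℝ}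
    (hγ : HasDerivAt γ v t) (ha : HasDerivAt (fun s => q (γ s)) a t) : a ≤ q v := by
  refine le_of_tendsto_of_tendsto ha.tendsto_slope_zero_right
    ((hq.tendsto v).comp hγ.tendsto_slope_zero_right) ?_
  filter_upwards [self_mem_nhdsWithin] with h (hh : 0 < h)
  calc h⁻¹ • (q (γ (t + h)) - q (γ t)) ≤ h⁻¹ * q (γ (t + h) - γ t) := by
        rw [smul_eq_mul]
        gcongr
        exact (le_abs_self _).trans (abs_sub_map_le_sub q _ _)
    _ = q (h⁻¹ • (γ (t + h) - γ t)) := by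
        rw [map_smul_eq_mul, Real.norm_of_nonneg (inv_nonneg.2 hh.le)]

theorem HasDerivAt.log_neg_log_div_rpow {a b : ℝ → ℝ} {a' b' t : ℝ} (L : ℝ)
    (ha : HasDerivAt a a' t) (hb : HasDerivAt b b' t) (ha0 : 0 < a t) (ha1 : a t < 1)
    (hb0 : 0 < b t) :
    HasDerivAt (fun s => Real.log (-Real.log (a s) / b s ^ L))
      (a' / (a t * Real.log (a t)) - L * (b' / b t)) t := by
  have hlog : Real.log (a t) < 0 := Real.log_neg ha0 ha1
  have hsplit : (fun s => Real.log (-Real.log (a s)) - L * Real.log (b s))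
      =ᶠ[𝓝 t] fun s => Real.log (-Real.log (a s) / b s ^ L) := by
    filter_upwards [ha.continuousAt.eventually_lt continuousAt_const ha1,
      ha.continuousAt.eventually_const_lt ha0, hb.continuousAt.eventually_const_lt hb0]
      with s hs1 hs0 hbs
    have : Real.log (a s) < 0 := Real.log_neg hs0 hs1
    rw [Real.log_div (by linarith) (Real.rpow_pos_of_pos hbs L).ne', Real.log_rpow hbs]
  refine HasDerivAt.congr_of_eventuallyEq ?_ hsplit.symm
  convert ((ha.log ha0.ne').fun_neg.log (by linarith)).fun_sub
    ((hb.log hb0.ne').const_mul L) using 1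
  field_simp

theorem sum_exp_neg_mul_neg_log_sum_le {ι : Type*} (s : Finset ι) (q : ι → ℝ) :
    (∑ i ∈ s, Real.exp (-q i)) * -Real.log (∑ i ∈ s, Real.exp (-q i)) ≤
      ∑ i ∈ s, q i * Real.exp (-q i) := by
  rw [Finset.sum_mul]
  refine Finset.sum_le_sum fun i hi => ?_
  have hle : Real.exp (-q i) ≤ ∑ j ∈ s, Real.exp (-q j) :=
    Finset.single_le_sum (fun j _ => (Real.exp_pos (-q j)).le) hi
  have hlog := Real.log_le_log (Real.exp_pos _) hle
  rw [Real.log_exp] at hlog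
  rw [mul_comm]
  exact mul_le_mul_of_nonneg_right (by linarith) (Real.exp_pos _).le

theorem hasDerivAt_comp_smul_one {V : Type*} [NormedAddCommGroup V] [InnerProductSpace ℝ V]
    [CompleteSpace V] {g : V → ℝ} {v : V} (hg : DifferentiableAt ℝ g v) :
    HasDerivAt (fun c : ℝ => g (c • v)) (inner ℝ (gradient g v) v) 1 := by
  have hline : HasDerivAt (fun c : ℝ => c • v) v 1 := by
    simpa using (hasDerivAt_id (1 : ℝ)).smul_const v
  exact hg.hasGradientAt.hasFDerivAt.comp_hasDerivAt_of_eq 1 hline (one_smul ℝ v).symm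

namespace ExpLoss

variable {p d m : ℕ} {f : E p → E d → ℝ} {x : Fin m → E d} {y : Fin m → ℝ}

theorem differentiable (hf : ∀ x' : E d, Differentiable ℝ fun θ => f θ x') :
    Differentiable ℝ (ExpLoss f x y) :=
  Differentiable.fun_sum fun i _ => (((hf (x i)).const_mul (y i)).neg).exp

theorem pos (hm : 0 < m) (θ : E p) : 0 < ExpLoss f x y θ :=
  haveI : Nonempty (Fin m) := ⟨⟨0, hm⟩⟩
  Finset.sum_pos (fun _ _ => Real.exp_pos _) Finset.univ_nonempty

theorem inner_gradient_self {L : ℝ} (hf : ∀ x' : E d, Differentiable ℝ fun θ => f θ x')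
    (hhom : ∀ c : ℝ, 0 < c → ∀ (θ : E p) (x' : E d), f (c • θ) x' = c ^ L * f θ x')
    (θ : E p) :
    inner ℝ (gradient (ExpLoss f x y) θ) θ =
      -(L * ∑ i, y i * f θ (x i) * Real.exp (-(y i * f θ (x i)))) := by
  have hscale : (fun c : ℝ => ∑ i, Real.exp (-(y i * (c ^ L * f θ (x i)))))
      =ᶠ[𝓝 1] fun c => ExpLoss f x y (c • θ) := by
    filter_upwards [lt_mem_nhds one_pos] with c hc
    simp only [ExpLoss, hhom c hc]
  have hpow : HasDerivAt (fun c : ℝ => c ^ L) L 1 := by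
    simpa using Real.hasDerivAt_rpow_const (p := L) (Or.inl one_ne_zero)
  have hderiv : HasDerivAt (fun c : ℝ => ∑ i, Real.exp (-(y i * (c ^ L * f θ (x i)))))
      (∑ i, Real.exp (-(y i * f θ (x i))) * -(y i * (L * f θ (x i)))) 1 := by
    refine HasDerivAt.fun_sum fun i _ => ?_
    simpa using (((hpow.mul_const (f θ (x i))).const_mul (y i)).fun_neg).exp
  rw [((hasDerivAt_comp_smul_one ((differentiable hf) θ)).congr_of_eventuallyEq
    hscale).unique hderiv, Finset.mul_sum, ← Finset.sum_neg_distrib]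
  exact Finset.sum_congr rfl fun i _ => by ring

theorem mul_log_inv_le_mul_dualNorm {L : ℝ} {N : E p → ℝ} (hN : IsNormOn N) (hL : 0 ≤ L)
    (hf : ∀ x' : E d, Differentiable ℝ fun θ => f θ x')
    (hhom : ∀ c : ℝ, 0 < c → ∀ (θ : E p) (x' : E d), f (c • θ) x' = c ^ L * f θ x')
    (θ : E p) :
    L * ExpLoss f x y θ * Real.log (1 / ExpLoss f x y θ) ≤
      N θ * DualNorm N (gradient (ExpLoss f x y) θ) :=
  calc L * ExpLoss f x y θ * Real.log (1 / ExpLoss f x y θ)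
      = L * (ExpLoss f x y θ * -Real.log (ExpLoss f x y θ)) := by
        rw [one_div, Real.log_inv]; ring
    _ ≤ L * ∑ i, y i * f θ (x i) * Real.exp (-(y i * f θ (x i))) :=
        mul_le_mul_of_nonneg_left (sum_exp_neg_mul_neg_log_sum_le _ _) hL
    _ = inner ℝ (gradient (ExpLoss f x y) θ) (-θ) := by
        rw [inner_neg_right, inner_gradient_self hf hhom, neg_neg]
    _ ≤ DualNorm N (gradient (ExpLoss f x y) θ) * N (-θ) := DualNorm.inner_le_mul hN _ _
    _ = N θ * DualNorm N (gradient (ExpLoss f x y) θ) := by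
        rw [mul_comm, ← hN.coe_toSeminorm, map_neg_eq_map]

end ExpLoss

namespace IsSteepestFlow

variable {p : ℕ} {N 𝓛 : E p → ℝ} {θ θ' : ℝ → E p}

theorem hasDerivAt_comp (hflow : IsSteepestFlow N 𝓛 θ θ') (h𝓛 : Differentiable ℝ 𝓛) {s : ℝ}
    (hs : 0 ≤ s) : HasDerivAt (fun u => 𝓛 (θ u)) (-N (θ' s) ^ 2) s := by
  obtain ⟨hθ, hinner, hnorm⟩ := hflow s hs
  have h := (h𝓛 (θ s)).hasGradientAt.hasFDerivAt.comp_hasDerivAt s hθ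
  rwa [Function.comp_def, InnerProductSpace.toDual_apply_apply, real_inner_comm, hinner,
    ← hnorm] at h

theorem antitoneOn_comp (hflow : IsSteepestFlow N 𝓛 θ θ') (h𝓛 : Differentiable ℝ 𝓛) :
    AntitoneOn (fun u => 𝓛 (θ u)) (Set.Ici 0) :=
  antitoneOn_of_hasDerivWithinAt_nonpos (convex_Ici 0)
    (fun _ hs => (hflow.hasDerivAt_comp h𝓛 hs).continuousAt.continuousWithinAt)
    (fun _ hs => (hflow.hasDerivAt_comp h𝓛 (interior_subset hs)).hasDerivWithinAt)
    fun _ _ => neg_nonpos.2 (sq_nonneg _)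

end IsSteepestFlow

theorem stmt_3_general {p d m : ℕ} (hm : 0 < m)
    (x : Fin m → E d) (y : Fin m → ℝ)
    (L : ℝ) (hL : 0 < L) (f : E p → E d → ℝ)
    (hf : ∀ x' : E d, ContDiff ℝ 1 fun θ => f θ x')
    (hhom : ∀ c : ℝ, 0 < c → ∀ (θ : E p) (x' : E d), f (c • θ) x' = c ^ L * f θ x')
    (N : E p → ℝ) (hN : IsNormOn N)
    (θ θ' : ℝ → E p) (hflow : IsSteepestFlow N (ExpLoss f x y) θ θ')
    (t0 : ℝ) (ht0 : 0 ≤ t0) (hsep : ExpLoss f x y (θ t0) < 1)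
    (t : ℝ) (ht : t0 < t) (hθ0 : θ t ≠ 0)
    (hNdiff : DifferentiableAt ℝ (fun s => N (θ s)) t) :
    deriv (fun s => Real.log (SoftMargin N (ExpLoss f x y) L (θ s))) t ≥
      L * (N (θ' t)) ^ 2 *
        (1 / (L * ExpLoss f x y (θ t) * Real.log (1 / ExpLoss f x y (θ t))) -
          1 / (N (θ t) * N (θ' t))) ∧
    L * (N (θ' t)) ^ 2 *
        (1 / (L * ExpLoss f x y (θ t) * Real.log (1 / ExpLoss f x y (θ t))) -
          1 / (N (θ t) * N (θ' t))) ≥ 0 := by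
  have hf' : ∀ x' : E d, Differentiable ℝ fun θ => f θ x' :=
    fun x' => (hf x').differentiable one_ne_zero
  have h𝓛 := ExpLoss.differentiable (x := x) (y := y) hf'
  have ht' : 0 ≤ t := ht0.trans ht.le
  set ℓ := ExpLoss f x y (θ t)
  have hℓ0 : 0 < ℓ := ExpLoss.pos hm _
  have hℓ1 : ℓ < 1 := (hflow.antitoneOn_comp h𝓛 ht0 ht' ht.le).trans_lt hsep
  have hG : 0 < Real.log (1 / ℓ) := Real.log_pos (one_lt_one_div hℓ0 hℓ1)
  have hNθ : 0 < N (θ t) := hN.pos hθ0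
  have hkey : L * ℓ * Real.log (1 / ℓ) ≤ N (θ t) * N (θ' t) := by
    rw [(hflow t ht').2.2]
    exact ExpLoss.mul_log_inv_le_mul_dualNorm hN hL.le hf' hhom _
  have hNrate : deriv (fun s => N (θ s)) t ≤ N (θ' t) :=
    hN.toSeminorm.le_of_hasDerivAt hN.continuous (hflow t ht').1 hNdiff.hasDerivAt
  have hderiv := (hflow.hasDerivAt_comp h𝓛 ht').log_neg_log_div_rpow L hNdiff.hasDerivAt
    hℓ0 hℓ1 hNθ
  have hrhs : L * N (θ' t) ^ 2 * (1 / (L * ℓ * Real.log (1 / ℓ)) - 1 / (N (θ t) * N (θ' t))) =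
      N (θ' t) ^ 2 / (ℓ * Real.log (1 / ℓ)) - L * (N (θ' t) / N (θ t)) := by
    rcases eq_or_ne (N (θ' t)) 0 with hv | hv
    · simp [hv]
    · field_simp
  refine ⟨?_, ?_⟩
  · unfold SoftMargin
    rw [hderiv.deriv, hrhs, one_div, Real.log_inv, mul_neg, div_neg, ← neg_div]
    gcongr
  · have hpos : 0 < L * ℓ * Real.log (1 / ℓ) := by positivity
    have hrecip := one_div_le_one_div_of_le hpos hkey
    exact mul_nonneg (by positivity) (sub_nonneg.2 hrecip)

theorem stmt_3 {p d m : ℕ} (hp : 0 < p) (hd : 0 < d) (hm : 0 < m)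
    (x : Fin m → E d) (y : Fin m → ℝ) (hy : ∀ i, y i = 1 ∨ y i = -1)
    (L : ℝ) (hL : 0 < L) (f : E p → E d → ℝ)
    (hf : ∀ x' : E d, ContDiff ℝ 1 fun θ => f θ x')
    (hhom : ∀ c : ℝ, 0 < c → ∀ (θ : E p) (x' : E d), f (c • θ) x' = c ^ L * f θ x')
    (N : E p → ℝ) (hN : IsNormOn N)
    (θ θ' : ℝ → E p) (hflow : IsSteepestFlow N (ExpLoss f x y) θ θ')
    (t0 : ℝ) (ht0 : 0 ≤ t0) (hsep : ExpLoss f x y (θ t0) < 1)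
    (t : ℝ) (ht : t0 < t) (hθ0 : θ t ≠ 0)
    (hg0 : gradient (ExpLoss f x y) (θ t) ≠ 0)
    (hNdiff : DifferentiableAt ℝ (fun s => N (θ s)) t)
    (hγdiff : DifferentiableAt ℝ
      (fun s => Real.log (SoftMargin N (ExpLoss f x y) L (θ s))) t) :
    deriv (fun s => Real.log (SoftMargin N (ExpLoss f x y) L (θ s))) t ≥
      L * (N (θ' t)) ^ 2 *
        (1 / (L * ExpLoss f x y (θ t) * Real.log (1 / ExpLoss f x y (θ t))) -
          1 / (N (θ t) * N (θ' t))) ∧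
    L * (N (θ' t)) ^ 2 *
        (1 / (L * ExpLoss f x y (θ t) * Real.log (1 / ExpLoss f x y (θ t))) -
          1 / (N (θ t) * N (θ' t))) ≥ 0 :=
  stmt_3_general hm x y L hL f hf hhom N hN θ θ' hflow t0 ht0 hsep t ht hθ0 hNdiff
end
end

section
/- Let θ ∈ ℝ^p satisfy y_i f(θ, x_i) ≥ 1 for all i ∈ {1, …, m}. Then the vector v = −θ satisfies, for every index i with y_i f(θ, x_i) = 1, ⟨v, ∇_θ(1 − y_i f(θ, x_i))⟩ = L > 0; equivalently, ⟨θ, y_i ∇_θ f(θ, x_i)⟩ = L for every active constraint i. In particular, the Mangasarian–Fromovitz constraint qualification holds at every feasible point of the margin-maximization problem min ½N(θ)² subject to y_i f(θ, x_i) ≥ 1 for all i. -/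
open Filter

noncomputable section

/-! Differentiating `c ↦ f(cθ, x) = c ^ L f(θ, x)` at `c = 1` gives Euler's identity
`⟨θ, ∇_θ f(θ, x)⟩ = L f(θ, x)`; on an active constraint `y_i f(θ, x_i) = 1` both inner
products therefore equal `L`. -/

open Topology

theorem fderiv_apply_self_eq_of_rpow_homogeneous {V : Type*} [NormedAddCommGroup V]
    [NormedSpace ℝ V] {F : V → ℝ} {L : ℝ} {v : V} (hF : DifferentiableAt ℝ F v)
    (hhom : ∀ c : ℝ, 0 < c → F (c • v) = c ^ L * F v) :
    fderiv ℝ F v v = L * F v := by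
  have hray : HasDerivAt (fun c : ℝ => c • v) v 1 := by
    simpa using (hasDerivAt_id (1 : ℝ)).smul_const v
  have hchain : HasDerivAt (fun c : ℝ => F (c • v)) (fderiv ℝ F v v) 1 := by
    have hF1 : HasFDerivAt F (fderiv ℝ F v) ((1 : ℝ) • v) := by simpa using hF.hasFDerivAt
    exact hF1.comp_hasDerivAt 1 hray
  have hpow : HasDerivAt (fun c : ℝ => c ^ L * F v) (L * F v) 1 := by
    simpa using (Real.hasDerivAt_rpow_const (p := L) (Or.inl one_ne_zero)).mul_const (F v)
  have hnear : (fun c : ℝ => F (c • v)) =ᶠ[𝓝 1] fun c => c ^ L * F v := by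
    filter_upwards [eventually_gt_nhds one_pos] with c hc using hhom c hc
  exact hchain.unique (hpow.congr_of_eventuallyEq hnear)

theorem stmt_8_general {p d m : ℕ} (x : Fin m → E d) (y : Fin m → ℝ) (L : ℝ) (hL : 0 < L) (f : E p → E d → ℝ)
    (hf : ∀ x' : E d, ContDiff ℝ 1 fun θ => f θ x')
    (hhom : ∀ c : ℝ, 0 < c → ∀ (θ : E p) (x' : E d), f (c • θ) x' = c ^ L * f θ x')
    (θ : E p) :
    ∀ i, y i * f θ (x i) = 1 →
      (inner ℝ (-θ) (gradient (fun w => 1 - y i * f w (x i)) θ) : ℝ) = L ∧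
      (0:ℝ) < L ∧
      (inner ℝ θ (y i • gradient (fun w => f w (x i)) θ) : ℝ) = L := by
  intro i hi
  have hdiff : DifferentiableAt ℝ (fun w => f w (x i)) θ :=
    (hf (x i)).differentiable one_ne_zero θ
  have euler := fderiv_apply_self_eq_of_rpow_homogeneous hdiff fun c hc => hhom c hc θ (x i)
  refine ⟨?_, hL, ?_⟩
  · rw [inner_neg_left, inner_gradient_right, fderiv_const_sub, fderiv_const_mul hdiff]
    simp only [neg_apply, smul_apply, smul_eq_mul, euler, RCLike.conj_to_real, neg_neg]
    linear_combination L * hi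
  · rw [real_inner_smul_right, inner_gradient_right, RCLike.conj_to_real, euler]
    linear_combination L * hi

theorem stmt_8 {p d m : ℕ} (hp : 0 < p) (hd : 0 < d) (hm : 0 < m)
    (x : Fin m → E d) (y : Fin m → ℝ) (hy : ∀ i, y i = 1 ∨ y i = -1)
    (L : ℝ) (hL : 0 < L) (f : E p → E d → ℝ)
    (hf : ∀ x' : E d, ContDiff ℝ 1 fun θ => f θ x')
    (hhom : ∀ c : ℝ, 0 < c → ∀ (θ : E p) (x' : E d), f (c • θ) x' = c ^ L * f θ x')
    (θ : E p) (hfeas : ∀ i, 1 ≤ y i * f θ (x i)) :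
    ∀ i, y i * f θ (x i) = 1 →
      (inner ℝ (-θ) (gradient (fun w => 1 - y i * f w (x i)) θ) : ℝ) = L ∧
      (0:ℝ) < L ∧
      (inner ℝ θ (y i • gradient (fun w => f w (x i)) θ) : ℝ) = L :=
  stmt_8_general x y L hL f hf hhom θ
end
end
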